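/- arXiv:1507.07485 — 4 statements merged into one kernel-verified Lean document; each statement's English description precedes it below -/
import Mathlib

section
/- Let a = (a_1, a_2, ...) be a sequence of nonzero complex numbers with a_2 + a_1^2 ≠ 0. Then the algebra Λ_a is finitely generated as a module over its polynomial subalgebra C[Q_1, Q_2] (where Q_1 = a_1 y + z and Q_2 = a_2 y^2 + z^2); in particular Λ_a is a finitely generated C-algebra. -/
/-!
Write `B = ℂ[Q₁, Q₂]`. From `(a₂ + a₁²) y² = Q₂ - Q₁² + 2 a₁ Q₁ y` and `z = Q₁ - a₁ y`, the
ring `ℂ[y,z]` is generated over `B` by `y`, which is integral over `B`; so `ℂ[y,z]` is a finite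
`B`-module. Since `B` is Noetherian, its `B`-submodule `Λ_a` is spanned by a finite set `S`,
and then `S ∪ {Q₁, Q₂}` generates `Λ_a` as a `ℂ`-algebra.
-/

open MvPolynomial

noncomputable section

/-- The polynomial ring `ℂ[y,z]`, with `y = X 0`, `z = X 1`. -/
abbrev R2 := MvPolynomial (Fin 2) ℂ

/-- The generalized power sum `Q_i = a_i y^i + z^i`. -/
def Q2 (a : ℕ → ℂ) (i : ℕ) : R2 := C (a i) * X 0 ^ i + X 1 ^ i

/-- The algebra `Λ_a` generated by the `Q_i`, `i ≥ 1`. -/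
def Lam (a : ℕ → ℂ) : Subalgebra ℂ R2 :=
  Algebra.adjoin ℂ {f : R2 | ∃ i : ℕ, 1 ≤ i ∧ f = Q2 a i}

/-- The subalgebra `ℂ[Q_1, Q_2]`. -/
def Bsub (a : ℕ → ℂ) : Subalgebra ℂ R2 :=
  Algebra.adjoin ℂ {Q2 a 1, Q2 a 2}

theorem isIntegral_of_sq_eq {R A : Type*} [CommRing R] [Ring A] [Algebra R A] {x : A}
    (b c : R) (h : x ^ 2 = algebraMap R A b * x + algebraMap R A c) : IsIntegral R x :=
  ⟨Polynomial.X ^ 2 - (Polynomial.C b * Polynomial.X + Polynomial.C c),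
    Polynomial.monic_X_pow_sub Polynomial.degree_linear_lt, by simp [h]⟩

namespace Subalgebra

variable {R A : Type*} [CommRing R] [CommRing A] [Algebra R A] {B L : Subalgebra R A}

def toSubmoduleOfLE (h : B ≤ L) : Submodule B A where
  carrier := L
  add_mem' := L.add_mem
  zero_mem' := L.zero_mem
  smul_mem' b _ hx := L.mul_mem (h b.2) hx

theorem exists_finset_subset_and_subset_span [IsNoetherianRing B] [Module.Finite B A]
    (h : B ≤ L) :
    ∃ S : Finset A, ↑S ⊆ (L : Set A) ∧ (L : Set A) ⊆ Submodule.span B (S : Set A) := by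
  obtain ⟨S, hS⟩ := IsNoetherian.noetherian (toSubmoduleOfLE h)
  exact ⟨S, fun s hs ↦ hS.le (Submodule.subset_span hs), fun x hx ↦ hS.ge hx⟩

theorem fg_of_subset_span {S : Set A} (hB : B.FG) (hS : S.Finite) (hBL : B ≤ L)
    (hSL : S ⊆ L) (hLS : (L : Set A) ⊆ Submodule.span B S) : L.FG := by
  obtain ⟨T, rfl⟩ := hB
  refine fg_def.2 ⟨T ∪ S, T.finite_toSet.union hS, le_antisymm ?_ ?_⟩
  · exact Algebra.adjoin_le (Set.union_subset (Algebra.subset_adjoin.trans hBL) hSL)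
  · rw [Algebra.adjoin_union_eq_adjoin_adjoin]
    exact hLS.trans (Algebra.span_le_adjoin _ S)

end Subalgebra

section

variable (a : ℕ → ℂ)

theorem C_mem_Bsub (c : ℂ) : C c ∈ Bsub a := (Bsub a).algebraMap_mem c

theorem Q2_one_mem_Bsub : Q2 a 1 ∈ Bsub a := Algebra.subset_adjoin (by simp)

theorem Q2_two_mem_Bsub : Q2 a 2 ∈ Bsub a := Algebra.subset_adjoin (by simp)

theorem Bsub_fg : (Bsub a).FG := Subalgebra.fg_def.2 ⟨_, Set.toFinite _, rfl⟩

theorem Bsub_le_Lam : Bsub a ≤ Lam a :=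
  Algebra.adjoin_le <| Set.pair_subset (Algebra.subset_adjoin ⟨1, le_rfl, rfl⟩)
    (Algebra.subset_adjoin ⟨2, one_le_two, rfl⟩)

variable {a}

theorem isIntegral_X_zero (h2 : a 2 + a 1 ^ 2 ≠ 0) : IsIntegral (Bsub a) (X 0 : R2) := by
  set c := (a 2 + a 1 ^ 2)⁻¹
  refine isIntegral_of_sq_eq
    ⟨C (2 * a 1 * c) * Q2 a 1, mul_mem (C_mem_Bsub a _) (Q2_one_mem_Bsub a)⟩
    ⟨C c * (Q2 a 2 - Q2 a 1 ^ 2), mul_mem (C_mem_Bsub a _)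
      (sub_mem (Q2_two_mem_Bsub a) (pow_mem (Q2_one_mem_Bsub a) 2))⟩ ?_
  calc (X 0 : R2) ^ 2 = C (c * (a 2 + a 1 ^ 2)) * X 0 ^ 2 := by
        rw [inv_mul_cancel₀ h2, C_1, one_mul]
    _ = C (2 * a 1 * c) * Q2 a 1 * X 0 + C c * (Q2 a 2 - Q2 a 1 ^ 2) := by
        simp only [Q2, map_mul, map_add, map_pow, map_ofNat]
        ring

theorem adjoin_X_zero_eq_top : Algebra.adjoin (Bsub a) {(X 0 : R2)} = ⊤ := by
  refine Subalgebra.restrictScalars_injective ℂ ?_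
  rw [Subalgebra.restrictScalars_top, eq_top_iff, ← adjoin_range_X, Algebra.adjoin_le_iff]
  rintro _ ⟨i, rfl⟩
  have hy : (X 0 : R2) ∈ Algebra.adjoin (Bsub a) {(X 0 : R2)} :=
    Algebra.self_mem_adjoin_singleton _ _
  fin_cases i
  · exact hy
  · have hz : (X 1 : R2) = Q2 a 1 - C (a 1) * X 0 := by simp [Q2]
    exact hz ▸ sub_mem (Subalgebra.algebraMap_mem _ (⟨_, Q2_one_mem_Bsub a⟩ : Bsub a))
      (mul_mem (Subalgebra.algebraMap_mem _ (⟨_, C_mem_Bsub a _⟩ : Bsub a)) hy)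

theorem module_finite_Bsub (h2 : a 2 + a 1 ^ 2 ≠ 0) : Module.Finite (Bsub a) R2 := by
  have := (isIntegral_X_zero h2).fg_adjoin_singleton
  rw [adjoin_X_zero_eq_top, Algebra.top_toSubmodule] at this
  exact ⟨this⟩

end

theorem lambda_finite_over_CQ1Q2_general (a : ℕ → ℂ)
    (h2 : a 2 + (a 1) ^ 2 ≠ 0) :
    (∃ S : Finset R2, (↑S : Set R2) ⊆ (Lam a : Set R2) ∧
      (Lam a : Set R2) ⊆ (Submodule.span (Bsub a) (↑S : Set R2) : Set R2)) ∧
    (Lam a).FG := by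
  have := isNoetherianRing_of_fg (Bsub_fg a)
  have := module_finite_Bsub h2
  obtain ⟨S, hSL, hLS⟩ := Subalgebra.exists_finset_subset_and_subset_span (Bsub_le_Lam a)
  exact ⟨⟨S, hSL, hLS⟩,
    Subalgebra.fg_of_subset_span (Bsub_fg a) S.finite_toSet (Bsub_le_Lam a) hSL hLS⟩

/-- If `a` is a sequence of nonzero complex numbers with `a_2 + a_1^2 ≠ 0`, then `Λ_a` is
finitely generated as a module over `ℂ[Q_1, Q_2]`; in particular it is a finitely
generated `ℂ`-algebra. -/
theorem lambda_finite_over_CQ1Q2 (a : ℕ → ℂ) (ha : ∀ i : ℕ, 1 ≤ i → a i ≠ 0)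
    (h2 : a 2 + (a 1) ^ 2 ≠ 0) :
    (∃ S : Finset R2, (↑S : Set R2) ⊆ (Lam a : Set R2) ∧
      (Lam a : Set R2) ⊆ (Submodule.span (Bsub a) (↑S : Set R2) : Set R2)) ∧
    (Lam a).FG :=
  lambda_finite_over_CQ1Q2_general a h2
end
end

section
/- Let a = (a_1, a_2, ...) be a sequence of nonzero complex numbers with a_2 ≠ −a_1^2 and (a_2, a_3) ≠ (a_1^2, a_1^3). Then the C[Q_1, Q_2]-submodule M of Λ_a generated by 1 and Q_3 is free of rank 2 with basis {1, Q_3}; in particular its Hilbert series (with the grading by polynomial degree) is (1+u^3)/((1−u)(1−u^2)). -/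
open MvPolynomial

noncomputable section

/-- The degree-`n` homogeneous component of a graded subspace of `ℂ[y,z]`. -/
def comp2 (M : Submodule ℂ R2) (n : ℕ) : Submodule ℂ R2 :=
  M ⊓ homogeneousSubmodule (Fin 2) ℂ n

/-- The Hilbert series of a graded subspace of `ℂ[y,z]`, as a power series over `ℚ`. -/
def hilb2 (M : Submodule ℂ R2) : PowerSeries ℚ :=
  PowerSeries.mk fun n => (Module.finrank ℂ (comp2 M n) : ℚ)

/-!
Put `c = a₁² + a₂`. Over `(u, v) ∈ ℂ²` the fibre of `(Q₁, Q₂)` consists of the points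
`(y, u - a₁ y)` with `c y² - 2 a₁ u y + u² - v = 0`: it is never empty, and off the curve
`fibreDisc · q3Gap = 0` it has two points at which `Q₃` takes different values. The hypotheses
on `a` make that curve proper. So if `F(Q₁, Q₂) + G(Q₁, Q₂) Q₃ = 0`, then `G` vanishes off a
curve, hence `G = 0`, and then `F = 0`. This injectivity makes the images `Q₁ᵖ Q₂^q` and
`Q₁ᵖ Q₂^q Q₃` of the monomials a basis of `M` by homogeneous elements of degrees `p + 2q` and
`p + 2q + 3`, from which the Hilbert series is counted.
-/

namespace MvPolynomial

theorem eq_zero_of_eval_eq_zero_of_eval_ne_zero {σ K : Type*} [Field K] [Infinite K]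
    {G H : MvPolynomial σ K} (hH : H ≠ 0) (h : ∀ x, eval x H ≠ 0 → eval x G = 0) : G = 0 := by
  have hGH : G * H = 0 := MvPolynomial.funext fun x => by
    by_cases hx : eval x H = 0 <;> simp [hx, h]
  exact (mul_eq_zero.mp hGH).resolve_right hH

theorem span_inf_homogeneousSubmodule {σ R ι : Type*} [CommSemiring R]
    {v : ι → MvPolynomial σ R} {deg : ι → ℕ} (hv : ∀ i, (v i).IsHomogeneous (deg i)) (n : ℕ) :
    Submodule.span R (Set.range v) ⊓ homogeneousSubmodule σ R n =
      Submodule.span R (Set.range fun i : {i // deg i = n} => v i) := by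
  apply le_antisymm
  · rintro x ⟨hx, hxn⟩
    rw [← homogeneousComponent_eq_self (hxn : x.IsHomogeneous n)]
    have hmap := Submodule.mem_map_of_mem (f := homogeneousComponent n) hx
    rw [Submodule.map_span, ← Set.range_comp] at hmap
    refine Submodule.span_le.mpr ?_ hmap
    rintro _ ⟨i, rfl⟩
    rw [Function.comp_apply, homogeneousComponent_of_mem (hv i)]
    split_ifs with hi
    · exact Submodule.subset_span ⟨⟨i, hi.symm⟩, rfl⟩
    · exact Submodule.zero_mem _
  · rw [Submodule.span_le]
    rintro _ ⟨⟨i, rfl⟩, rfl⟩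
    exact ⟨Submodule.subset_span ⟨i, rfl⟩, hv i⟩

theorem finrank_span_inf_homogeneousSubmodule {σ K ι : Type*} [Field K]
    {v : ι → MvPolynomial σ K} (hli : LinearIndependent K v) {deg : ι → ℕ}
    (hv : ∀ i, (v i).IsHomogeneous (deg i)) (n : ℕ) [Finite {i // deg i = n}] :
    Module.finrank K ↥(Submodule.span K (Set.range v) ⊓ homogeneousSubmodule σ K n) =
      Nat.card {i // deg i = n} := by
  have := Fintype.ofFinite {i // deg i = n}
  rw [span_inf_homogeneousSubmodule hv, Nat.card_eq_fintype_card]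
  exact finrank_span_eq_card (hli.comp _ Subtype.val_injective)

end MvPolynomial

def qEval (a : ℕ → ℂ) : MvPolynomial (Fin 2) ℂ →ₐ[ℂ] R2 := aeval ![Q2 a 1, Q2 a 2]

theorem eval_Q2 (a : ℕ → ℂ) (i : ℕ) (p : Fin 2 → ℂ) :
    eval p (Q2 a i) = a i * p 0 ^ i + p 1 ^ i := by
  simp [Q2]

theorem eval_qEval {a : ℕ → ℂ} {p x : Fin 2 → ℂ} (h1 : eval p (Q2 a 1) = x 0)
    (h2 : eval p (Q2 a 2) = x 1) (F : MvPolynomial (Fin 2) ℂ) :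
    eval p (qEval a F) = eval x F := by
  have hx : (fun i => eval p (![Q2 a 1, Q2 a 2] i)) = x := by
    ext i
    fin_cases i <;> simp [h1, h2]
  rw [qEval, aeval_eq_bind₁, ← hx]
  exact aeval_bind₁ p _ F

/-- A quarter of the discriminant of `(a₁² + a₂) y² - 2 a₁ x₀ y + x₀² - x₁`, whose roots `y`
give the points `(y, x₀ - a₁ y)` of the fibre of `(Q₁, Q₂)` over `x`. -/
def fibreDisc (a : ℕ → ℂ) : MvPolynomial (Fin 2) ℂ :=
  C (a 1 ^ 2 + a 2) * X 1 - C (a 2) * X 0 ^ 2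

theorem eval_fibreDisc (a : ℕ → ℂ) (x : Fin 2 → ℂ) :
    eval x (fibreDisc a) = (a 1 ^ 2 + a 2) * x 1 - a 2 * x 0 ^ 2 := by
  simp [fibreDisc]

def fibrePt (a : ℕ → ℂ) (x : Fin 2 → ℂ) (d : ℂ) : Fin 2 → ℂ :=
  ![(a 1 * x 0 + d) / (a 1 ^ 2 + a 2), x 0 - a 1 * ((a 1 * x 0 + d) / (a 1 ^ 2 + a 2))]

/-- Up to the factor `2 d / (a₁² + a₂)³`, the difference of the values of `Q₃` at the two
points `fibrePt a x (± d)` of a fibre. -/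
def q3Gap (a : ℕ → ℂ) : MvPolynomial (Fin 2) ℂ :=
  C (a 3 - a 1 ^ 3) * fibreDisc a + C (3 * a 1 * (a 1 * a 3 - a 2 ^ 2)) * X 0 ^ 2

theorem eval_q3Gap (a : ℕ → ℂ) (x : Fin 2 → ℂ) :
    eval x (q3Gap a) =
      (a 3 - a 1 ^ 3) * eval x (fibreDisc a) + 3 * a 1 * (a 1 * a 3 - a 2 ^ 2) * x 0 ^ 2 := by
  simp [q3Gap]

section Fibre

variable {a : ℕ → ℂ} {x : Fin 2 → ℂ} {d : ℂ}

theorem eval_qEval_fibrePt (hc : a 1 ^ 2 + a 2 ≠ 0) (hd : d ^ 2 = eval x (fibreDisc a))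
    (F : MvPolynomial (Fin 2) ℂ) : eval (fibrePt a x d) (qEval a F) = eval x F := by
  refine eval_qEval ?_ ?_ F
  · simp [eval_Q2, fibrePt]
  · rw [eval_fibreDisc] at hd
    simp only [eval_Q2, fibrePt, Matrix.cons_val_zero, Matrix.cons_val_one]
    field_simp
    linear_combination (a 1 ^ 2 + a 2) * hd

theorem eval_Q3_fibrePt_sub (hc : a 1 ^ 2 + a 2 ≠ 0) (hd : d ^ 2 = eval x (fibreDisc a)) :
    (a 1 ^ 2 + a 2) ^ 3 * (eval (fibrePt a x d) (Q2 a 3) - eval (fibrePt a x (-d)) (Q2 a 3)) =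
      2 * d * eval x (q3Gap a) := by
  rw [eval_q3Gap, ← hd]
  simp only [eval_Q2, fibrePt, Matrix.cons_val_zero, Matrix.cons_val_one]
  field_simp
  ring

end Fibre

theorem fibreDisc_ne_zero {a : ℕ → ℂ} (hc : a 1 ^ 2 + a 2 ≠ 0) : fibreDisc a ≠ 0 := by
  intro h
  have h01 := congrArg (eval ![0, 1]) h
  simp only [eval_fibreDisc, map_zero, Matrix.cons_val_zero, Matrix.cons_val_one]
    at h01
  exact hc (by linear_combination h01)

theorem q3Gap_ne_zero {a : ℕ → ℂ} (ha1 : a 1 ≠ 0) (hc : a 1 ^ 2 + a 2 ≠ 0)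
    (h3 : (a 2, a 3) ≠ ((a 1) ^ 2, (a 1) ^ 3)) : q3Gap a ≠ 0 := by
  intro h
  have h01 := congrArg (eval ![0, 1]) h
  have h10 := congrArg (eval ![1, 0]) h
  simp only [eval_q3Gap, eval_fibreDisc, map_zero, Matrix.cons_val_zero, Matrix.cons_val_one]
    at h01 h10
  have ha3 : a 3 = a 1 ^ 3 := by
    have h : (a 3 - a 1 ^ 3) * (a 1 ^ 2 + a 2) = 0 := by linear_combination h01
    exact sub_eq_zero.mp ((mul_eq_zero.mp h).resolve_right hc)
  have ha2 : a 2 = a 1 ^ 2 := by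
    have h : (3 * a 1 * (a 1 ^ 2 + a 2)) * (a 1 ^ 2 - a 2) = 0 := by
      rw [ha3] at h10
      linear_combination h10
    exact (sub_eq_zero.mp ((mul_eq_zero.mp h).resolve_left (by simp [ha1, hc]))).symm
  exact h3 (by rw [ha2, ha3])

def pairEval (a : ℕ → ℂ) : MvPolynomial (Fin 2) ℂ × MvPolynomial (Fin 2) ℂ →ₗ[ℂ] R2 :=
  (qEval a).toLinearMap.coprod (LinearMap.mulRight ℂ (Q2 a 3) ∘ₗ (qEval a).toLinearMap)

theorem pairEval_apply (a : ℕ → ℂ) (F G : MvPolynomial (Fin 2) ℂ) :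
    pairEval a (F, G) = qEval a F + qEval a G * Q2 a 3 :=
  rfl

theorem pairEval_injective {a : ℕ → ℂ} (ha1 : a 1 ≠ 0) (hc : a 1 ^ 2 + a 2 ≠ 0)
    (h3 : (a 2, a 3) ≠ ((a 1) ^ 2, (a 1) ^ 3)) : Function.Injective (pairEval a) := by
  rw [← LinearMap.ker_eq_bot, LinearMap.ker_eq_bot']
  rintro ⟨F, G⟩ h
  rw [pairEval_apply] at h
  have hfibre : ∀ x d, d ^ 2 = eval x (fibreDisc a) →
      eval x F + eval x G * eval (fibrePt a x d) (Q2 a 3) = 0 := fun x d hd => by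
    simpa [eval_qEval_fibrePt hc hd] using congrArg (eval (fibrePt a x d)) h
  have hG : G = 0 := by
    refine eq_zero_of_eval_eq_zero_of_eval_ne_zero
      (mul_ne_zero (fibreDisc_ne_zero hc) (q3Gap_ne_zero ha1 hc h3)) fun x hx => ?_
    rw [eval_mul, mul_ne_zero_iff] at hx
    obtain ⟨d, hd⟩ := IsAlgClosed.exists_pow_nat_eq (eval x (fibreDisc a)) two_pos
    have hd' : (-d) ^ 2 = eval x (fibreDisc a) := by rw [neg_sq, hd]
    have hd0 : d ≠ 0 := by rintro rfl; exact hx.1 (by rw [← hd]; ring)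
    have hgap := eval_Q3_fibrePt_sub hc hd
    have hsub : eval x G * (eval (fibrePt a x d) (Q2 a 3) - eval (fibrePt a x (-d)) (Q2 a 3))
        = 0 := by
      linear_combination hfibre x d hd - hfibre x (-d) hd'
    refine (mul_eq_zero.mp hsub).resolve_right fun h0 => ?_
    rw [h0, mul_zero] at hgap
    exact mul_ne_zero (mul_ne_zero two_ne_zero hd0) hx.2 hgap.symm
  subst hG
  refine Prod.ext (MvPolynomial.funext fun x => ?_) rfl
  obtain ⟨d, hd⟩ := IsAlgClosed.exists_pow_nat_eq (eval x (fibreDisc a)) two_pos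
  simpa using hfibre x d hd

theorem Bsub_eq_range (a : ℕ → ℂ) : Bsub a = (qEval a).range := by
  rw [Bsub, qEval, ← Algebra.adjoin_range_eq_range_aeval, Matrix.range_cons, Matrix.range_cons,
    Matrix.range_empty, Set.union_empty, Set.singleton_union]

theorem restrictScalars_span_one_Q3_eq_range (a : ℕ → ℂ) :
    (Submodule.span (Bsub a) {(1 : R2), Q2 a 3}).restrictScalars ℂ =
      LinearMap.range (pairEval a) := by
  ext x
  simp only [Submodule.restrictScalars_mem, Submodule.mem_span_pair, LinearMap.mem_range,
    Prod.exists, pairEval_apply, Subtype.exists, Bsub_eq_range, AlgHom.mem_range,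
    Subalgebra.smul_def, smul_eq_mul, mul_one]
  constructor
  · rintro ⟨_, ⟨F, rfl⟩, _, ⟨G, rfl⟩, rfl⟩
    exact ⟨F, G, rfl⟩
  · rintro ⟨F, G, rfl⟩
    exact ⟨_, ⟨F, rfl⟩, _, ⟨G, rfl⟩, rfl⟩

theorem linearIndependent_one_Q3 {a : ℕ → ℂ} (hinj : Function.Injective (pairEval a)) :
    LinearIndependent (Bsub a) ![(1 : R2), Q2 a 3] := by
  rw [LinearIndependent.pair_iff]
  rintro ⟨s, hs⟩ ⟨t, ht⟩ hst
  rw [Bsub_eq_range] at hs ht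
  obtain ⟨F, rfl⟩ := hs
  obtain ⟨G, rfl⟩ := ht
  have h0 : pairEval a (F, G) = pairEval a 0 := by
    rw [pairEval_apply, map_zero, ← hst, Subalgebra.smul_def, Subalgebra.smul_def]
    simp [mul_comm]
  obtain ⟨rfl, rfl⟩ : F = 0 ∧ G = 0 := Prod.ext_iff.mp (hinj h0)
  exact ⟨Subtype.ext (map_zero _), Subtype.ext (map_zero _)⟩

def pairMonomial (a : ℕ → ℂ) : (Fin 2 →₀ ℕ) ⊕ (Fin 2 →₀ ℕ) → R2 :=
  pairEval a ∘ (basisMonomials (Fin 2) ℂ).prod (basisMonomials (Fin 2) ℂ)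

def pairDegree : (Fin 2 →₀ ℕ) ⊕ (Fin 2 →₀ ℕ) → ℕ :=
  Sum.elim (fun d => d 0 + 2 * d 1) (fun d => d 0 + 2 * d 1 + 3)

theorem isHomogeneous_Q2 (a : ℕ → ℂ) (i : ℕ) : (Q2 a i).IsHomogeneous i :=
  ((isHomogeneous_X_pow 0 i).C_mul _).add (isHomogeneous_X_pow 1 i)

theorem isHomogeneous_qEval_monomial (a : ℕ → ℂ) (d : Fin 2 →₀ ℕ) :
    (qEval a (monomial d 1)).IsHomogeneous (d 0 + 2 * d 1) := by
  rw [qEval, aeval_monomial, map_one, one_mul, Finsupp.prod_fintype _ _ (fun _ => pow_zero _),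
    Fin.prod_univ_two]
  simpa using ((isHomogeneous_Q2 a 1).pow (d 0)).mul ((isHomogeneous_Q2 a 2).pow (d 1))

theorem isHomogeneous_pairMonomial (a : ℕ → ℂ) (i : (Fin 2 →₀ ℕ) ⊕ (Fin 2 →₀ ℕ)) :
    (pairMonomial a i).IsHomogeneous (pairDegree i) := by
  rcases i with d | d
  · simpa [pairMonomial, pairDegree, Module.Basis.prod_apply, pairEval_apply]
      using isHomogeneous_qEval_monomial a d
  · simpa [pairMonomial, pairDegree, Module.Basis.prod_apply, pairEval_apply, add_comm]
      using (isHomogeneous_qEval_monomial a d).mul (isHomogeneous_Q2 a 3)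

theorem linearIndependent_pairMonomial {a : ℕ → ℂ} (hinj : Function.Injective (pairEval a)) :
    LinearIndependent ℂ (pairMonomial a) :=
  (Module.Basis.linearIndependent _).map' _ (LinearMap.ker_eq_bot.mpr hinj)

theorem range_pairEval (a : ℕ → ℂ) :
    LinearMap.range (pairEval a) = Submodule.span ℂ (Set.range (pairMonomial a)) := by
  rw [LinearMap.range_eq_map, ← Module.Basis.span_eq ((basisMonomials (Fin 2) ℂ).prod _),
    Submodule.map_span, ← Set.range_comp, pairMonomial]

def weightEqEquivFin (n : ℕ) : {d : Fin 2 →₀ ℕ // d 0 + 2 * d 1 = n} ≃ Fin (n / 2 + 1) where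
  toFun d := ⟨d.1 1, by omega⟩
  invFun j := ⟨Finsupp.single 0 (n - 2 * j) + Finsupp.single 1 (j : ℕ), by simp; omega⟩
  left_inv d := by
    ext i
    fin_cases i <;> simp; omega
  right_inv j := by simp

instance finite_weight_eq (n : ℕ) : Finite {d : Fin 2 →₀ ℕ // d 0 + 2 * d 1 = n} :=
  .of_equiv _ (weightEqEquivFin n).symm

instance finite_weight_add_three_eq (n : ℕ) :
    Finite {d : Fin 2 →₀ ℕ // d 0 + 2 * d 1 + 3 = n} :=
  .of_injective (β := {d : Fin 2 →₀ ℕ // d 0 + 2 * d 1 = n - 3}) (fun d => ⟨d.1, by omega⟩)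
    fun d e h => by simpa [Subtype.ext_iff] using h

theorem natCard_weight_eq (n : ℕ) :
    Nat.card {d : Fin 2 →₀ ℕ // d 0 + 2 * d 1 = n} = n / 2 + 1 := by
  rw [Nat.card_congr (weightEqEquivFin n), Nat.card_eq_fintype_card, Fintype.card_fin]

theorem natCard_weight_add_three_eq (n : ℕ) :
    Nat.card {d : Fin 2 →₀ ℕ // d 0 + 2 * d 1 + 3 = n} =
      if 3 ≤ n then (n - 3) / 2 + 1 else 0 := by
  split_ifs with hn
  · rw [← natCard_weight_eq]
    exact Nat.card_congr (Equiv.subtypeEquivRight fun d => by omega)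
  · have : IsEmpty {d : Fin 2 →₀ ℕ // d 0 + 2 * d 1 + 3 = n} := ⟨fun d => hn (by omega)⟩
    exact Nat.card_of_isEmpty

instance finite_pairDegree_eq (n : ℕ) : Finite {i // pairDegree i = n} :=
  have : Finite {d // pairDegree (Sum.inl d) = n} := finite_weight_eq n
  have : Finite {d // pairDegree (Sum.inr d) = n} := finite_weight_add_three_eq n
  .of_equiv _ Equiv.subtypeSum.symm

theorem natCard_pairDegree_eq (n : ℕ) :
    Nat.card {i // pairDegree i = n} = n / 2 + 1 + if 3 ≤ n then (n - 3) / 2 + 1 else 0 := by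
  have : Finite {d // pairDegree (Sum.inl d) = n} := finite_weight_eq n
  have : Finite {d // pairDegree (Sum.inr d) = n} := finite_weight_add_three_eq n
  rw [Nat.card_congr Equiv.subtypeSum, Nat.card_sum]
  exact congrArg₂ (· + ·) (natCard_weight_eq n) (natCard_weight_add_three_eq n)

theorem mk_mul_one_sub_X_sq :
    (PowerSeries.mk fun n => ((n / 2 + 1 : ℕ) : ℚ)) * (1 - PowerSeries.X ^ 2) =
      PowerSeries.mk 1 := by
  ext n
  rw [mul_sub, mul_one, map_sub, PowerSeries.coeff_mul_X_pow', PowerSeries.coeff_mk,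
    PowerSeries.coeff_mk, PowerSeries.coeff_mk, Pi.one_apply]
  split_ifs with hn
  · rw [show n / 2 + 1 = (n - 2) / 2 + 1 + 1 by omega, Nat.cast_succ, add_sub_cancel_left]
  · rw [show n / 2 = 0 by omega, zero_add, Nat.cast_one, sub_zero]

theorem mk_mul_one_sub_mul_one_sub :
    (PowerSeries.mk fun n => ((n / 2 + 1 : ℕ) : ℚ)) *
      ((1 - PowerSeries.X) * (1 - PowerSeries.X ^ 2)) = 1 := by
  rw [mul_comm (1 - PowerSeries.X), ← mul_assoc, mk_mul_one_sub_X_sq,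
    PowerSeries.mk_one_mul_one_sub_eq_one]

theorem hilb2_range_pairEval {a : ℕ → ℂ} (hinj : Function.Injective (pairEval a)) :
    hilb2 (LinearMap.range (pairEval a)) =
      (1 + PowerSeries.X ^ 3) * PowerSeries.mk fun n => ((n / 2 + 1 : ℕ) : ℚ) := by
  ext n
  rw [hilb2, PowerSeries.coeff_mk, comp2, range_pairEval,
    finrank_span_inf_homogeneousSubmodule (linearIndependent_pairMonomial hinj)
      (isHomogeneous_pairMonomial a), natCard_pairDegree_eq, add_mul, one_mul, map_add,
    PowerSeries.coeff_X_pow_mul', PowerSeries.coeff_mk, PowerSeries.coeff_mk]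
  split_ifs <;> push_cast <;> rfl

/-- If `a_2 ≠ -a_1^2` and `(a_2, a_3) ≠ (a_1^2, a_1^3)`, then the `ℂ[Q_1,Q_2]`-submodule `M`
of `Λ_a` generated by `1` and `Q_3` is free of rank `2` with basis `{1, Q_3}`
(i.e. `1, Q_3` are linearly independent over `ℂ[Q_1,Q_2]`); in particular its Hilbert
series is `(1+u^3)/((1-u)(1-u^2))`. -/
theorem submodule_one_Q3_free (a : ℕ → ℂ) (ha : ∀ i : ℕ, 1 ≤ i → a i ≠ 0)
    (h2 : a 2 ≠ -(a 1) ^ 2) (h3 : (a 2, a 3) ≠ ((a 1) ^ 2, (a 1) ^ 3)) :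
    LinearIndependent ↥(Bsub a) ![(1 : R2), Q2 a 3] ∧
    hilb2 (Submodule.restrictScalars ℂ
        (Submodule.span (Bsub a) {(1 : R2), Q2 a 3})) *
        ((1 - PowerSeries.X) * (1 - PowerSeries.X ^ 2)) =
      1 + PowerSeries.X ^ 3 := by
  have hc : a 1 ^ 2 + a 2 ≠ 0 := fun h => h2 (by linear_combination h)
  have hinj := pairEval_injective (ha 1 le_rfl) hc h3
  refine ⟨linearIndependent_one_Q3 hinj, ?_⟩
  rw [restrictScalars_span_one_Q3_eq_range, hilb2_range_pairEval hinj, mul_assoc,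
    mk_mul_one_sub_mul_one_sub, mul_one]
end
end

section
/- Let N ≥ 1 and let a_{ij} (i ≥ 1, 1 ≤ j ≤ N) be nonzero complex numbers. Set Q_i(x_1,...,x_N) := Σ_{j=1}^N a_{ij} x_j^i, and let A be the subalgebra of C[x_1,...,x_N] generated by all Q_i, i ≥ 1. Then A is finitely generated as a C-algebra if and only if the only point (x_1,...,x_N) ∈ C^N satisfying Q_i(x_1,...,x_N) = 0 for all i ≥ 1 is the origin. -/
/-!
If the `Q_i` have a common zero `x ≠ 0`, say with `x j₀ ≠ 0`, evaluate at the dual-number point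
`t • x + ε • e j₀` over `ℂ[t]`: since `Q_i(x) = 0`, the image of `Q_i` is
`ε • i a_{i j₀} x_{j₀}^{i-1} t^{i-1}`. Hence every polynomial in `Q_1, …, Q_n` is sent into
`ℂ + ε • ℂ[t]_{<n}`, which does not contain the image of `Q_{n+1}`, so `A` is not finitely
generated.

Conversely, if the origin is the only common zero, the Nullstellensatz gives
`(x_1, …, x_N)^n ⊆ (Q_i)_{i ≥ 1}` for some `n`. As the `Q_i` are homogeneous of positive degree,
induction on the degree shows that the monomials of degree `≤ n` span `ℂ[x]` as an `A`-module,
and the Artin–Tate lemma makes `A` finitely generated.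
-/

open MvPolynomial

noncomputable section

theorem Subalgebra.FG.exists_le_of_le_iSup {R A ι : Type*} [CommSemiring R] [Semiring A]
    [Algebra R A] [Nonempty ι] {S : Subalgebra R A} (hS : S.FG) {T : ι → Subalgebra R A}
    (hT : Directed (· ≤ ·) T) (h : S ≤ ⨆ i, T i) : ∃ i, S ≤ T i := by
  obtain ⟨t, ht, rfl⟩ := Subalgebra.fg_def.1 hS
  have htT : t ⊆ ⋃ i, (T i : Set A) := by
    rw [← Subalgebra.coe_iSup_of_directed hT]
    exact Algebra.subset_adjoin.trans h
  obtain ⟨I, hI, htI⟩ := Set.finite_subset_iUnion ht htT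
  obtain ⟨i, hi⟩ := hT.finset_le hI.toFinset
  refine ⟨i, Algebra.adjoin_le fun x hx => ?_⟩
  obtain ⟨j, hj, hxj⟩ := Set.mem_iUnion₂.1 (htI hx)
  exact hi j (hI.mem_toFinset.2 hj) hxj

namespace DualNumber

open TrivSqZeroExt

variable (K : Type*) {R : Type*} [CommSemiring K] [CommSemiring R] [Algebra K R]

def scalarAddEps (M : Submodule K R) : Subalgebra K (DualNumber R) where
  carrier := {z | z.fst ∈ Set.range (algebraMap K R) ∧ z.snd ∈ M}
  mul_mem' := by
    rintro z w ⟨⟨c, hc⟩, hz⟩ ⟨⟨d, hd⟩, hw⟩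
    refine ⟨⟨c * d, by simp [hc, hd]⟩, ?_⟩
    rw [snd_mul, ← hc, ← hd, ← Algebra.smul_def, ← Algebra.commutes, ← Algebra.smul_def]
    exact M.add_mem (M.smul_mem c hw) (M.smul_mem d hz)
  add_mem' := by
    rintro z w ⟨⟨c, hc⟩, hz⟩ ⟨⟨d, hd⟩, hw⟩
    exact ⟨⟨c + d, by simp [hc, hd]⟩, M.add_mem hz hw⟩
  algebraMap_mem' c := ⟨⟨c, rfl⟩, M.zero_mem⟩

variable {K}

@[simp]
theorem inr_mem_scalarAddEps {M : Submodule K R} {m : R} : inr m ∈ scalarAddEps K M ↔ m ∈ M :=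
  ⟨fun h => h.2, fun h => ⟨⟨0, by simp⟩, h⟩⟩

theorem scalarAddEps_mono : Monotone (scalarAddEps K (R := R)) :=
  fun _ _ hMN _ hz => ⟨hz.1, hMN hz.2⟩

end DualNumber

theorem Polynomial.C_mul_X_pow_mem_degreeLT_iff {R : Type*} [Semiring R] [Nontrivial R]
    {c : R} {k n : ℕ} :
    Polynomial.C c * Polynomial.X ^ k ∈ Polynomial.degreeLT R n ↔ c = 0 ∨ k < n := by
  rcases eq_or_ne c 0 with rfl | hc
  · simp
  · simp [Polynomial.mem_degreeLT, Polynomial.degree_C_mul_X_pow k hc, hc]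

section GradedFiniteness

variable {σ R : Type*} [CommSemiring R]

attribute [local instance] MvPolynomial.gradedAlgebra

theorem MvPolynomial.homogeneousComponent_mul_of_isHomogeneous {p q : MvPolynomial σ R} {i : ℕ}
    (hq : q.IsHomogeneous i) (n : ℕ) [Decidable (i ≤ n)] :
    homogeneousComponent n (p * q) = if i ≤ n then homogeneousComponent (n - i) p * q else 0 := by
  rw [← decomposition.decompose'_apply, ← decomposition.decompose'_apply]
  exact DirectSum.coe_decompose_mul_of_right_mem (homogeneousSubmodule σ R) n hq

variable {B : Subalgebra R (MvPolynomial σ R)} {S : Set (MvPolynomial σ R)}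

theorem MvPolynomial.homogeneousComponent_mem_of_mem_ideal_span (hSB : S ⊆ B)
    (hS : ∀ f ∈ S, ∃ i, 0 < i ∧ f.IsHomogeneous i) {W : Submodule B (MvPolynomial σ R)} {d : ℕ}
    (hW : ∀ e < d, ∀ p : MvPolynomial σ R, p.IsHomogeneous e → p ∈ W)
    {q : MvPolynomial σ R} (hq : q ∈ Ideal.span S) : homogeneousComponent d q ∈ W := by
  classical
  obtain ⟨n, c, f, rfl⟩ := Submodule.mem_span_set'.1 hq
  rw [map_sum]
  refine W.sum_mem fun k _ => ?_
  obtain ⟨i, hi, hfi⟩ := hS _ (f k).2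
  rw [smul_eq_mul, homogeneousComponent_mul_of_isHomogeneous hfi]
  split_ifs with hid
  · rw [mul_comm]
    exact W.smul_mem ⟨f k, hSB (f k).2⟩
      (hW _ (by omega) _ (homogeneousComponent_isHomogeneous _ _))
  · exact W.zero_mem

theorem MvPolynomial.module_finite_of_pow_idealOfVars_le [Finite σ] (hSB : S ⊆ B)
    (hS : ∀ f ∈ S, ∃ i, 0 < i ∧ f.IsHomogeneous i) {n : ℕ}
    (hn : idealOfVars σ R ^ n ≤ Ideal.span S) : Module.Finite B (MvPolynomial σ R) := by
  set G := (fun u => monomial u (1 : R)) '' {u : σ →₀ ℕ | u.degree ≤ n}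
  have hG : G.Finite := (Finsupp.finite_of_degree_le n).image _
  suffices hhom : ∀ d, ∀ p : MvPolynomial σ R, p.IsHomogeneous d → p ∈ Submodule.span B G by
    refine ⟨⟨hG.toFinset, eq_top_iff.2 fun p _ => ?_⟩⟩
    rw [hG.coe_toFinset, ← sum_homogeneousComponent p]
    exact Submodule.sum_mem _ fun i _ => hhom i _ (homogeneousComponent_isHomogeneous i p)
  intro d
  induction d using Nat.strong_induction_on with
  | _ d ih =>
  intro p hp
  have hdeg : ∀ u ∈ p.support, u.degree = d := fun u hu =>
    by_contra fun h => mem_support_iff.1 hu (hp.coeff_eq_zero h)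
  rcases lt_or_ge d n with hdn | hnd
  · rw [p.as_sum]
    refine Submodule.sum_mem _ fun u hu => ?_
    rw [← mul_one (coeff u p), ← smul_eq_mul, ← smul_monomial]
    exact Submodule.smul_of_tower_mem _ _
      (Submodule.subset_span ⟨u, (hdeg u hu).trans_le hdn.le, rfl⟩)
  · rw [← homogeneousComponent_eq_self hp]
    refine homogeneousComponent_mem_of_mem_ideal_span hSB hS ih (hn ?_)
    exact (mem_pow_idealOfVars_iff n p).2 fun u hu => (hdeg u hu).symm ▸ hnd

end GradedFiniteness

theorem MvPolynomial.adjoin_fg_of_forall_eval_eq_zero {σ K : Type*} [Finite σ] [Field K]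
    [IsAlgClosed K] {S : Set (MvPolynomial σ K)} (hS : ∀ f ∈ S, ∃ i, 0 < i ∧ f.IsHomogeneous i)
    (hzero : ∀ x : σ → K, (∀ f ∈ S, eval x f = 0) → x = 0) : (Algebra.adjoin K S).FG := by
  have hvars : idealOfVars σ K ≤ (Ideal.span S).radical := by
    rw [← vanishingIdeal_zeroLocus_eq_radical (K := K), idealOfVars, Ideal.span_le]
    rintro _ ⟨_, rfl⟩ x hx
    rw [hzero x fun f hf => hx f (Ideal.subset_span hf)]
    simp
  obtain ⟨n, hn⟩ := Ideal.exists_pow_le_of_le_radical_of_fg hvars (idealOfVars_fg σ K)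
  have : Module.Finite (Algebra.adjoin K S) (MvPolynomial σ K) :=
    module_finite_of_pow_idealOfVars_le Algebra.subset_adjoin hS hn
  exact (Subalgebra.fg_top _).1 <| fg_of_fg_of_fg K _ _ Algebra.FiniteType.out
    Module.Finite.fg_top Subtype.val_injective

section GenPowerSum

variable {σ K : Type*} [Fintype σ] [CommSemiring K]

def genPowerSum (a : ℕ → σ → K) (i : ℕ) : MvPolynomial σ K :=
  ∑ j, C (a i j) * X j ^ i

theorem isHomogeneous_genPowerSum (a : ℕ → σ → K) (i : ℕ) : (genPowerSum a i).IsHomogeneous i :=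
  IsHomogeneous.sum _ _ _ fun _ _ => isHomogeneous_C_mul_X_pow _ _ _

open TrivSqZeroExt

theorem aeval_inl_add_inr_genPowerSum {R : Type*} [CommSemiring R] [Algebra K R]
    (a : ℕ → σ → K) (r m : σ → R) (i : ℕ) :
    aeval (fun j => (inl (r j) + inr (m j) : DualNumber R)) (genPowerSum a i) =
      inl (∑ j, algebraMap K R (a i j) * r j ^ i) +
        inr (∑ j, i * algebraMap K R (a i j) * r j ^ (i - 1) * m j) := by
  refine TrivSqZeroExt.ext ?_ ?_
  · simp [genPowerSum, fst_sum, algebraMap_eq_inl']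
  · simp [genPowerSum, snd_sum, algebraMap_eq_inl', snd_pow, mul_assoc, mul_left_comm]

def dualPoint [DecidableEq σ] (x : σ → K) (j₀ : σ) : σ → DualNumber (Polynomial K) :=
  fun j => inl (Polynomial.C (x j) * Polynomial.X) + inr (Pi.single j₀ 1 j)

theorem aeval_dualPoint_genPowerSum [DecidableEq σ] (a : ℕ → σ → K) (x : σ → K) (j₀ : σ)
    (i : ℕ) (hx : ∑ j, a i j * x j ^ i = 0) :
    aeval (dualPoint x j₀) (genPowerSum a i) =
      inr (Polynomial.C (i * a i j₀ * x j₀ ^ (i - 1)) * Polynomial.X ^ (i - 1)) := by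
  have hfst : ∑ j, algebraMap K (Polynomial K) (a i j) * (Polynomial.C (x j) * Polynomial.X) ^ i
      = 0 := by
    simp_rw [mul_pow, ← mul_assoc, Polynomial.algebraMap_eq, ← Polynomial.C_pow,
      ← Polynomial.C_mul, ← Finset.sum_mul, ← map_sum, hx, map_zero, zero_mul]
  unfold dualPoint
  rw [aeval_inl_add_inr_genPowerSum, hfst, inl_zero, zero_add]
  congr 1
  simp [Pi.single_apply, mul_pow, ← mul_assoc]

end GenPowerSum

theorem eq_zero_of_adjoin_genPowerSum_fg {σ K : Type*} [Fintype σ] [CommRing K] [IsDomain K]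
    [CharZero K] {a : ℕ → σ → K} (ha : ∀ i, 1 ≤ i → ∀ j, a i j ≠ 0)
    (hfg : (Algebra.adjoin K {f | ∃ i, 1 ≤ i ∧ f = genPowerSum a i}).FG) (x : σ → K)
    (hx : ∀ i, 1 ≤ i → ∑ j, a i j * x j ^ i = 0) : x = 0 := by
  classical
  by_contra hx0
  obtain ⟨j₀, hj₀⟩ := Function.ne_iff.1 hx0
  let T : ℕ → Subalgebra K (MvPolynomial σ K) := fun n =>
    (DualNumber.scalarAddEps K (Polynomial.degreeLT K n)).comap (aeval (dualPoint x j₀))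
  have hT : Monotone T := fun _ _ hmn => (Subalgebra.gc_map_comap _).monotone_u
    (DualNumber.scalarAddEps_mono (Polynomial.degreeLT_mono hmn))
  have hmem : ∀ i n, 1 ≤ i → (genPowerSum a i ∈ T n ↔ i - 1 < n) := by
    intro i n hi
    have hc : (i : K) * a i j₀ * x j₀ ^ (i - 1) ≠ 0 :=
      mul_ne_zero (mul_ne_zero (by exact_mod_cast (by omega : i ≠ 0)) (ha i hi j₀))
        (pow_ne_zero _ hj₀)
    rw [Subalgebra.mem_comap, aeval_dualPoint_genPowerSum a x j₀ i (hx i hi),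
      DualNumber.inr_mem_scalarAddEps, Polynomial.C_mul_X_pow_mem_degreeLT_iff, or_iff_right hc]
  obtain ⟨n, hn⟩ := hfg.exists_le_of_le_iSup hT.directed_le <| Algebra.adjoin_le <| by
    rintro _ ⟨i, hi, rfl⟩
    exact Algebra.mem_iSup_of_mem i ((hmem i i hi).2 (by omega))
  have := (hmem (n + 1) n (by omega)).1 (hn (Algebra.subset_adjoin ⟨n + 1, by omega, rfl⟩))
  omega

theorem adjoin_genPowerSums_fg_iff_general (N : ℕ) (a : ℕ → Fin N → ℂ)
    (ha : ∀ i : ℕ, 1 ≤ i → ∀ j : Fin N, a i j ≠ 0) :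
    (Algebra.adjoin ℂ {f : MvPolynomial (Fin N) ℂ |
        ∃ i : ℕ, 1 ≤ i ∧ f = ∑ j : Fin N, C (a i j) * X j ^ i}).FG ↔
      ∀ x : Fin N → ℂ, (∀ i : ℕ, 1 ≤ i → ∑ j : Fin N, a i j * x j ^ i = 0) → x = 0 := by
  refine ⟨eq_zero_of_adjoin_genPowerSum_fg ha, fun h => ?_⟩
  refine adjoin_fg_of_forall_eval_eq_zero ?_ fun x hx => h x fun i hi => ?_
  · rintro _ ⟨i, hi, rfl⟩
    exact ⟨i, hi, isHomogeneous_genPowerSum a i⟩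
  · simpa using hx _ ⟨i, hi, rfl⟩

/-- If `N ≥ 1` and `a_{ij}` (`i ≥ 1`, `1 ≤ j ≤ N`) are nonzero complex numbers,
`Q_i = Σ_j a_{ij} x_j^i`, and `A` is the subalgebra of `ℂ[x_1,...,x_N]` generated by the
`Q_i`, `i ≥ 1`, then `A` is finitely generated as a `ℂ`-algebra if and only if the only
common zero of the `Q_i` is the origin. -/
theorem adjoin_genPowerSums_fg_iff (N : ℕ) (hN : 1 ≤ N) (a : ℕ → Fin N → ℂ)
    (ha : ∀ i : ℕ, 1 ≤ i → ∀ j : Fin N, a i j ≠ 0) :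
    (Algebra.adjoin ℂ {f : MvPolynomial (Fin N) ℂ |
        ∃ i : ℕ, 1 ≤ i ∧ f = ∑ j : Fin N, C (a i j) * X j ^ i}).FG ↔
      ∀ x : Fin N → ℂ, (∀ i : ℕ, 1 ≤ i → ∑ j : Fin N, a i j * x j ^ i = 0) → x = 0 :=
  adjoin_genPowerSums_fg_iff_general N a ha
end
end

section
/- Let C be a commutative ring, I an ideal of C, C' a subring of C containing I, and B a subring of C'. If C, C' and C/I are all projective as B-modules, then C'/I is projective as a B-module. -/
/-!
Since `C ⧸ I` is projective, the quotient map `C → C ⧸ I` has a `B`-linear section `s`. For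
`x ∈ C'` we have `s x̄ - x ∈ I ⊆ C'`, so `s` maps `C' ⧸ I` back into `C'` and splits the
projection `C' → C' ⧸ I`; hence `C' ⧸ I` is a direct summand of the projective module `C'`.
-/

theorem Submodule.projective_quotient_comap_subtype {R M : Type*} [Ring R] [AddCommGroup M]
    [Module R M] {N P : Submodule R M} (hNP : N ≤ P) [Module.Projective R (M ⧸ N)]
    [Module.Projective R P] : Module.Projective R (P ⧸ N.comap P.subtype) := by
  obtain ⟨s, hs⟩ := Module.projective_lifting_property N.mkQ LinearMap.id N.mkQ_surjective
  have hs_sub (x : M) : s (N.mkQ x) - x ∈ N := by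
    rw [← Submodule.Quotient.mk_eq_zero, Submodule.Quotient.mk_sub]
    exact sub_eq_zero.mpr (LinearMap.congr_fun hs (N.mkQ x))
  let σ : P ⧸ N.comap P.subtype →ₗ[R] P :=
    LinearMap.codRestrict P (s ∘ₗ (N.comap P.subtype).mapQ N P.subtype le_rfl) fun y => by
      induction y using Submodule.Quotient.induction_on with
      | _ x => simpa using P.add_mem (hNP (hs_sub x)) x.2
  refine Module.Projective.of_split σ (N.comap P.subtype).mkQ (LinearMap.ext fun y => ?_)
  induction y using Submodule.Quotient.induction_on with
  | _ x => exact (Submodule.Quotient.eq _).mpr (by simpa [σ] using hs_sub x)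

theorem quotient_projective_of_projective_general (B : Type*) [CommRing B]
    (C : Type*) [CommRing C] [Algebra B C] (C' : Subalgebra B C) (I : Ideal C)
    (hIC' : (I : Set C) ⊆ (C' : Set C))
    (hC' : Module.Projective B C')
    (hCI : Module.Projective B (C ⧸ I)) :
    Module.Projective B (↥C' ⧸ I.comap (C'.val : ↥C' →ₐ[B] C)) :=
  have : Module.Projective B (C ⧸ I.restrictScalars B) := hCI
  have : Module.Projective B (Subalgebra.toSubmodule C') := hC'
  have : Module.Projective B (C' ⧸ (I.comap (C'.val : ↥C' →ₐ[B] C)).restrictScalars B) :=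
    Submodule.projective_quotient_comap_subtype (N := I.restrictScalars B)
      (P := Subalgebra.toSubmodule C') hIC'
  .of_equiv (Submodule.Quotient.restrictScalarsEquiv B _)

/-- Let `C` be a commutative ring, `I` an ideal of `C`, `C'` a subring of `C` containing
`I`, and `B` a subring of `C'` (formalized: `C` is a commutative `B`-algebra and `C'` is a
`B`-subalgebra of `C` containing `I`). If `C`, `C'` and `C/I` are all projective as
`B`-modules, then so is `C'/I`. -/
theorem quotient_projective_of_projective (B : Type*) [CommRing B]
    (C : Type*) [CommRing C] [Algebra B C] (C' : Subalgebra B C) (I : Ideal C)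
    (hIC' : (I : Set C) ⊆ (C' : Set C))
    (hC : Module.Projective B C) (hC' : Module.Projective B C')
    (hCI : Module.Projective B (C ⧸ I)) :
    Module.Projective B (↥C' ⧸ I.comap (C'.val : ↥C' →ₐ[B] C)) :=
  quotient_projective_of_projective_general B C C' I hIC' hC' hCI
end
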